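/- arXiv:2202.03468 — 7 statements merged into one kernel-verified Lean document; each statement's English description precedes it below -/
import Mathlib

section
/- Let K be a compact Hausdorff space, φ : K → K a continuous surjection, 𝐊 the space of φ-strings and Φ the associated shift homeomorphism. If the set of perfectly φ-periodic points is of first category in K, then the set of Φ-periodic points is of first category in 𝐊; conversely, if the set of Φ-periodic points is of first category in 𝐊, then the set of perfectly φ-periodic points is of first category in K. -/
open Function Set

section auxx
variable {K : Type*}

lemma auxExistsString (φ : K → K) (hφs : Function.Surjective φ) (x : K) :
    ∃ s : ℤ → K, (∀ n : ℤ, φ (s n) = s (n + 1)) ∧ s 0 = x := by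
  have hgφ : ∀ y, φ (Function.surjInv hφs y) = y := fun y => Function.surjInv_eq hφs y
  set g := Function.surjInv hφs with hg
  refine ⟨fun n => if 0 ≤ n then φ^[n.toNat] x else g^[(-n).toNat] x, ?_, by norm_num⟩
  intro n
  by_cases h0 : 0 ≤ n
  · have h1 : 0 ≤ n + 1 := by omega
    have h2 : (n + 1).toNat = n.toNat + 1 := by omega
    simp only [if_pos h0, if_pos h1, h2, Function.iterate_succ_apply']
  · by_cases h1 : n = -1
    · subst h1
      norm_num [hgφ]
    · have h2 : ¬ 0 ≤ n + 1 := by omega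
      have h3 : (-n).toNat = (-(n + 1)).toNat + 1 := by omega
      simp only [if_neg h0, if_neg h2, h3, Function.iterate_succ_apply', hgφ]

lemma auxIter (φ : K → K) {s : ℤ → K} (hs : ∀ n : ℤ, φ (s n) = s (n + 1)) (n : ℤ) (j : ℕ) :
    s (n + j) = φ^[j] (s n) := by
  induction j with
  | zero => simp
  | succ j ih =>
    have h : (n + (j + 1 : ℕ) : ℤ) = (n + j) + 1 := by push_cast; ring
    rw [h, ← hs, ih]
    exact (Function.iterate_succ_apply' φ j (s n)).symm

lemma auxExtend (φ : K → K) (hφs : Function.Surjective φ) {s : ℤ → K}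
    (hs : ∀ n : ℤ, φ (s n) = s (n + 1)) (m : ℤ) (x : K) (hx : φ x = s m) :
    ∃ t : ℤ → K, (∀ n : ℤ, φ (t n) = t (n + 1)) ∧ (∀ j, m ≤ j → t j = s j) ∧ t (m - 1) = x := by
  obtain ⟨u, hu, hu0⟩ := auxExistsString φ hφs x
  refine ⟨fun j => if m ≤ j then s j else u (j - m + 1), ?_, fun j hj => if_pos hj, ?_⟩
  · intro n
    by_cases h1 : m ≤ n
    · have h2 : m ≤ n + 1 := by omega
      simp only [if_pos h1, if_pos h2]
      exact hs n
    · by_cases h2 : m ≤ n + 1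
      · have h3 : n + 1 = m := by omega
        have h4 : n - m + 1 = 0 := by omega
        simp only [if_neg h1, if_pos h2, h4, hu0, hx, h3, le_refl, if_pos]
      · have h5 : n + 1 - m + 1 = (n - m + 1) + 1 := by ring
        simp only [if_neg h1, if_neg h2, h5]
        exact hu _
  · have h6 : ¬ m ≤ m - 1 := by omega
    have h7 : m - 1 - m + 1 = 0 := by ring
    simp only [if_neg h6, h7, hu0]

lemma auxOrbit (φ : K → K) {k : K} {q : ℕ} (hq : 0 < q) (hper : φ^[q] k = k) (a : ℕ) :
    ∃ j, j < q ∧ φ^[a] k = φ^[j] k := by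
  induction a with
  | zero => exact ⟨0, hq, rfl⟩
  | succ a ih =>
    obtain ⟨j, hj, he⟩ := ih
    by_cases h : j + 1 < q
    · exact ⟨j + 1, h, by rw [Function.iterate_succ_apply' φ a k, he, Function.iterate_succ_apply' φ j k]⟩
    · have hjq : j + 1 = q := by omega
      refine ⟨0, hq, ?_⟩
      rw [Function.iterate_succ_apply' φ a k, he, ← Function.iterate_succ_apply' φ j k]
      show φ^[j+1] k = _
      rw [hjq, hper]
      rfl

end auxx

/-- A point `k` is perfectly `φ`-periodic: it is periodic with (minimal) period `p`
and the full preimage of its orbit `{k, φ(k), …, φ^{p-1}(k)}` equals the orbit. -/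
def PerfectlyPeriodic {K : Type*} (φ : K → K) (k : K) : Prop :=
  ∃ p : ℕ, 0 < p ∧ φ^[p] k = k ∧ (∀ m : ℕ, 0 < m → m < p → φ^[m] k ≠ k) ∧
    φ ⁻¹' ((fun i : ℕ => φ^[i] k) '' {i | i < p}) = (fun i : ℕ => φ^[i] k) '' {i | i < p}

/-- For a continuous non-invertible surjection `φ` of a compact Hausdorff
space `K`, the set of perfectly `φ`-periodic points is meager in `K` if and only if the
set of periodic points of the associated shift homeomorphism `Φ` is meager in the
space `𝐊` of `φ`-strings. -/
theorem stmt5 {K : Type*} [TopologicalSpace K] [CompactSpace K] [T2Space K]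
    (φ : K → K) (hφc : Continuous φ) (hφs : Function.Surjective φ)
    (hφni : ¬ Function.Injective φ) :
    IsMeagre {k : K | PerfectlyPeriodic φ k} ↔
    IsMeagre {s : {k : ℤ → K // ∀ n : ℤ, φ (k n) = k (n + 1)} |
      ∃ p : ℕ, 0 < p ∧ ∀ n : ℤ, s.1 (n + p) = s.1 n} := by
  classical
  -- the string space is compact Hausdorff, hence Baire
  have hclosedStr : IsClosed {f : ℤ → K | ∀ n : ℤ, φ (f n) = f (n + 1)} := by
    have he : {f : ℤ → K | ∀ n : ℤ, φ (f n) = f (n + 1)}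
        = ⋂ n : ℤ, {f : ℤ → K | φ (f n) = f (n + 1)} := by
      ext f; simp [Set.mem_iInter]
    rw [he]
    exact isClosed_iInter fun n => isClosed_eq (hφc.comp (continuous_apply n)) (continuous_apply (n + 1))
  haveI hcs : CompactSpace {k : ℤ → K // ∀ n : ℤ, φ (k n) = k (n + 1)} :=
    isCompact_iff_compactSpace.mp hclosedStr.isCompact
  -- helper facts about meagre sets
  have nwd_meagre : ∀ {X : Type _} [TopologicalSpace X], ∀ (s : Set X), IsNowhereDense s → IsMeagre s := by
    intro X _ s hs
    exact isMeagre_iff_countable_union_isNowhereDense.mpr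
      ⟨{s}, by simpa using hs, countable_singleton s, by simp⟩
  have open_nonmeagre : ∀ {X : Type _} [TopologicalSpace X] [BaireSpace X], ∀ (U : Set X),
      IsOpen U → U.Nonempty → IsMeagre U → False := by
    intro X _ _ U hU hne hm
    have hd : Dense Uᶜ := dense_of_mem_residual hm
    obtain ⟨x, hx1, hx2⟩ := hd.inter_open_nonempty U hU hne
    exact hx2 hx1
  constructor
  · -- perfectly periodic points meagre ⟹ periodic strings meagre
    intro hPP
    have hBmeagre : ∀ p : ℕ, IsMeagre {s : {k : ℤ → K // ∀ n : ℤ, φ (k n) = k (n + 1)} |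
        0 < p ∧ ∀ n : ℤ, s.1 (n + p) = s.1 n} := by
      intro p
      rcases Nat.eq_zero_or_pos p with hp | hp
      · subst hp
        have : {s : {k : ℤ → K // ∀ n : ℤ, φ (k n) = k (n + 1)} |
            0 < 0 ∧ ∀ n : ℤ, s.1 (n + (0:ℕ)) = s.1 n} = ∅ := by
          ext s; simp
        rw [this]
        exact IsMeagre.empty
      set B : Set {k : ℤ → K // ∀ n : ℤ, φ (k n) = k (n + 1)} :=
        {s | 0 < p ∧ ∀ n : ℤ, s.1 (n + p) = s.1 n} with hBdef
      have hBclosed : IsClosed B := by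
        have he : B = ⋂ n : ℤ, {s : {k : ℤ → K // ∀ n : ℤ, φ (k n) = k (n + 1)} |
            s.1 (n + p) = s.1 n} := by
          ext s; simp [hBdef, hp, Set.mem_iInter]
        rw [he]
        exact isClosed_iInter fun n => isClosed_eq
          ((continuous_apply (n + (p:ℤ))).comp continuous_subtype_val)
          ((continuous_apply n).comp continuous_subtype_val)
      have hint : interior B = ∅ := by
        by_contra hne
        obtain ⟨s, hs⟩ := nonempty_iff_ne_empty.mpr hne
        obtain ⟨U, hUopen, hUeq⟩ := isOpen_induced_iff.mp (isOpen_interior (s := B))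
        have hsU : s.1 ∈ U := by rw [← hUeq] at hs; exact hs
        obtain ⟨I, u, hIu, hIsub⟩ := isOpen_pi_iff.mp hUopen s.1 hsU
        set N : ℕ := I.sup (fun i => i.natAbs) with hN
        have hIN : ∀ i ∈ I, -(N:ℤ) ≤ i := by
          intro i hi
          have h1 : i.natAbs ≤ N := Finset.le_sup (f := fun i : ℤ => i.natAbs) hi
          omega
        set W : Set K := ⋂ i ∈ I, (fun x : K => φ^[(i + N).toNat] x) ⁻¹' (u i) with hW
        have hWopen : IsOpen W :=
          isOpen_biInter_finset fun i hi => ((hIu i hi).1.preimage (hφc.iterate _))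
        have hWne : W.Nonempty := by
          refine ⟨s.1 (-(N:ℤ)), mem_iInter₂.mpr fun i hi => ?_⟩
          have h1 : (-(N:ℤ) + ((i + N).toNat : ℕ)) = i := by
            have := hIN i hi; omega
          have h2 := auxIter φ s.2 (-(N:ℤ)) ((i + N).toNat)
          rw [h1] at h2
          simp only [mem_preimage]
          rw [← h2]
          exact (hIu i hi).2
        have hWPP : W ⊆ {k : K | PerfectlyPeriodic φ k} := by
          intro k hk
          obtain ⟨u0, hu0, hu00⟩ := auxExistsString φ hφs k
          set t : ℤ → K := fun j => u0 (j + N) with ht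
          have htstr : ∀ n : ℤ, φ (t n) = t (n + 1) := by
            intro n
            have h1 := hu0 (n + N)
            have h2 : (n + N) + 1 = (n + 1) + N := by ring
            rw [h2] at h1
            exact h1
          have htval : ∀ j : ℤ, -(N:ℤ) ≤ j → t j = φ^[(j + N).toNat] k := by
            intro j hj
            have h2 := auxIter φ hu0 0 ((j + N).toNat)
            have h3 : ((0:ℤ) + ((j + N).toNat : ℕ)) = j + N := by omega
            rw [h3, hu00] at h2
            exact h2
          have htU : t ∈ U := by
            apply hIsub
            intro i hi
            rw [htval i (hIN i hi)]
            exact mem_iInter₂.mp hk i hi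
          have htB : (⟨t, htstr⟩ : {k : ℤ → K // ∀ n : ℤ, φ (k n) = k (n + 1)}) ∈ B := by
            apply interior_subset
            rw [← hUeq]
            exact htU
          have htper : ∀ n : ℤ, t (n + p) = t n := htB.2
          have hkper : φ^[p] k = k := by
            have h1 := auxIter φ htstr (-(N:ℤ)) p
            have h2 : t (-(N:ℤ)) = k := by
              rw [htval _ le_rfl]; norm_num
            have h3 := htper (-(N:ℤ))
            rw [h1, h2] at h3
            exact h3
          have hkp : Function.IsPeriodicPt φ p k := hkper
          set q := Function.minimalPeriod φ k with hqdef
          have hq0 : 0 < q := hkp.minimalPeriod_pos hp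
          have hqper : φ^[q] k = k := Function.iterate_minimalPeriod
          have hqle : q ≤ p := Nat.le_of_dvd hp hkp.minimalPeriod_dvd
          refine ⟨q, hq0, hqper, ?_, ?_⟩
          · intro m hm hmq heq
            have : q ≤ m := Function.IsPeriodicPt.minimalPeriod_le hm heq
            omega
          · apply Set.Subset.antisymm
            · intro x hx
              obtain ⟨i, hiq, hieq⟩ := hx
              -- hieq : φ^[i] k = φ x ; i < q
              -- place x into a string at position (i - N - p) - 1
              have hiNp : t ((i:ℤ) - N - p) = φ^[i] k := by
                have h1 := htper ((i:ℤ) - N - p)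
                have h2 : ((i:ℤ) - N - p) + p = (i:ℤ) - N := by ring
                rw [h2] at h1
                have h3 : t ((i:ℤ) - N) = φ^[i] k := by
                  rw [htval ((i:ℤ) - N) (by omega)]
                  congr 1
                  omega
                rw [← h1, h3]
              have hφx : φ x = t ((i:ℤ) - N - p) := by rw [hiNp]; exact hieq.symm
              obtain ⟨t', ht'str, ht'eq, ht'x⟩ := auxExtend φ hφs htstr ((i:ℤ) - N - p) x hφx
              have ht'U : t' ∈ U := by
                apply hIsub
                intro i' hi'
                have h4 : (i:ℤ) - N - p ≤ i' := by
                  have h5 := hIN i' hi'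
                  have h6 : (i:ℤ) ≤ p := by exact_mod_cast le_of_lt (lt_of_lt_of_le hiq hqle)
                  omega
                rw [ht'eq i' h4, htval i' (hIN i' hi')]
                exact mem_iInter₂.mp hk i' hi'
              have ht'B : (⟨t', ht'str⟩ : {k : ℤ → K // ∀ n : ℤ, φ (k n) = k (n + 1)}) ∈ B := by
                apply interior_subset
                rw [← hUeq]
                exact ht'U
              have hx' : x = t' (((i:ℤ) - N - p - 1) + p) := by
                rw [← ht'x]
                exact (ht'B.2 ((i:ℤ) - N - p - 1)).symm
              have h7 : ((i:ℤ) - N - p - 1) + p = (i:ℤ) - N - 1 := by ring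
              have h8 : t' ((i:ℤ) - N - 1) = t ((i:ℤ) - N - 1) := ht'eq _ (by omega)
              have h9 : t ((i:ℤ) - N - 1) = φ^[i + p - 1] k := by
                have h10 := htper ((i:ℤ) - N - 1)
                have h11 : t ((i:ℤ) - N - 1 + p) = φ^[i + p - 1] k := by
                  rw [htval _ (by omega)]
                  congr 1
                  omega
                rw [← h10]
                exact h11
              have hxk : x = φ^[i + p - 1] k := by rw [hx', h7, h8, h9]
              obtain ⟨j, hjq, hje⟩ := auxOrbit φ hq0 hqper (i + p - 1)
              refine ⟨j, hjq, ?_⟩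
              show φ^[j] k = x
              rw [← hje, ← hxk]
            · intro x hx
              obtain ⟨i, hiq, hieq⟩ := hx
              obtain ⟨j, hjq, hje⟩ := auxOrbit φ hq0 hqper (i + 1)
              refine ⟨j, hjq, ?_⟩
              show φ^[j] k = φ x
              rw [← hje, Function.iterate_succ_apply' φ i k]
              exact congrArg φ hieq
        exact open_nonmeagre W hWopen hWne (hPP.mono hWPP)
      exact nwd_meagre _ (hBclosed.isNowhereDense_iff.mpr hint)
    have hcover : {s : {k : ℤ → K // ∀ n : ℤ, φ (k n) = k (n + 1)} |
        ∃ p : ℕ, 0 < p ∧ ∀ n : ℤ, s.1 (n + p) = s.1 n}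
        = ⋃ p : ℕ, {s : {k : ℤ → K // ∀ n : ℤ, φ (k n) = k (n + 1)} |
        0 < p ∧ ∀ n : ℤ, s.1 (n + p) = s.1 n} := by
      ext s; simp [Set.mem_iUnion]
    rw [hcover]
    exact isMeagre_iUnion hBmeagre
  · -- periodic strings meagre ⟹ perfectly periodic points meagre
    intro hPer
    by_contra hPP
    set A : ℕ → Set K := fun p => {k : K | 0 < p ∧ φ^[p] k = k ∧
      (∀ m : ℕ, 0 < m → m < p → φ^[m] k ≠ k) ∧
      φ ⁻¹' ((fun i : ℕ => φ^[i] k) '' {i | i < p}) = (fun i : ℕ => φ^[i] k) '' {i | i < p}} with hA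
    have hcover : {k : K | PerfectlyPeriodic φ k} = ⋃ p : ℕ, A p := by
      ext k; simp [PerfectlyPeriodic, hA, Set.mem_iUnion]
    obtain ⟨p, hp⟩ : ∃ p : ℕ, ¬ IsMeagre (A p) := by
      by_contra h
      push_neg at h
      exact hPP (by rw [hcover]; exact isMeagre_iUnion h)
    have hVne : (interior (closure (A p))).Nonempty := by
      rw [nonempty_iff_ne_empty]
      intro h
      exact hp (nwd_meagre _ h)
    obtain ⟨v, hv⟩ := hVne
    obtain ⟨k, hkV, hkA⟩ : ∃ k, k ∈ interior (closure (A p)) ∧ k ∈ A p := by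
      have hvc : v ∈ closure (A p) := interior_subset hv
      obtain ⟨k, hk1, hk2⟩ := mem_closure_iff.mp hvc _ isOpen_interior hv
      exact ⟨k, hk1, hk2⟩
    obtain ⟨hp0, hper, hmin, hperf⟩ := hkA
    set S := (fun i : ℕ => φ^[i] k) '' {i | i < p} with hS
    have hkS : k ∈ S := ⟨0, hp0, rfl⟩
    have hpre : ∀ x, φ x ∈ S → x ∈ S := by
      intro x hx
      rw [← hperf]
      exact hx
    have hchain : ∀ (m : ℕ) (x : K), φ^[m] x = k → x ∈ S := by
      intro m
      induction m with
      | zero => intro x hx; simp only [Function.iterate_zero_apply] at hx; rw [hx]; exact hkS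
      | succ m ih =>
        intro x hx
        rw [Function.iterate_succ_apply] at hx
        exact hpre x (ih _ hx)
    have hfib : ∀ x : K, φ^[p] x = k → x = k := by
      intro x hx
      obtain ⟨i, hip, hieq⟩ := hchain p x hx
      have h1 : φ^[p] x = x := by
        rw [← hieq, ← Function.iterate_add_apply φ p i k, add_comm,
          Function.iterate_add_apply φ i p k, hper]
      exact (hx.symm.trans h1).symm
    have hclCp : closure (A p) ⊆ {x : K | φ^[p] x = x} :=
      closure_minimal (fun x hx => hx.2.1) (isClosed_eq (hφc.iterate p) continuous_id)
    have hcm : IsClosedMap (φ^[p]) := (hφc.iterate p).isClosedMap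
    set A' := (φ^[p] '' (interior (closure (A p)))ᶜ)ᶜ with hA'
    have hA'open : IsOpen A' := (hcm _ (isOpen_interior.isClosed_compl)).isOpen_compl
    have hkA' : k ∈ A' := by
      intro hmem
      obtain ⟨x, hx1, hx2⟩ := hmem
      exact hx1 (by rw [hfib x hx2]; exact hkV)
    have hpreV : ∀ x : K, φ^[p] x ∈ A' → x ∈ interior (closure (A p)) := by
      intro x hx
      by_contra hxV
      exact hx ⟨x, hxV, rfl⟩
    have hfixV : ∀ y, y ∈ interior (closure (A p)) → φ^[p] y = y :=
      fun y hy => hclCp (interior_subset hy)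
    set 𝒪 : Set {k : ℤ → K // ∀ n : ℤ, φ (k n) = k (n + 1)} :=
      {s | s.1 0 ∈ A' ∩ interior (closure (A p))} with h𝒪
    have h𝒪open : IsOpen 𝒪 :=
      (hA'open.inter isOpen_interior).preimage ((continuous_apply (0:ℤ)).comp continuous_subtype_val)
    have h𝒪ne : 𝒪.Nonempty := by
      obtain ⟨u0, hu0, hu00⟩ := auxExistsString φ hφs k
      exact ⟨⟨u0, hu0⟩, by simp only [h𝒪, mem_setOf_eq, hu00]; exact ⟨hkA', hkV⟩⟩
    have h𝒪sub : 𝒪 ⊆ {s : {k : ℤ → K // ∀ n : ℤ, φ (k n) = k (n + 1)} |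
        ∃ p : ℕ, 0 < p ∧ ∀ n : ℤ, s.1 (n + p) = s.1 n} := by
      intro s hs
      refine ⟨p, hp0, ?_⟩
      have hs0 : s.1 0 ∈ A' ∩ interior (closure (A p)) := hs
      have hs0fix : φ^[p] (s.1 0) = s.1 0 := hfixV _ hs0.2
      have hstep : ∀ m : ℕ, s.1 (-((m * p : ℕ) : ℤ)) = s.1 0 := by
        intro m
        induction m with
        | zero => norm_num
        | succ m ih =>
          have harith : (-(((m+1) * p : ℕ) : ℤ) + (p:ℕ)) = -((m * p : ℕ) : ℤ) := by
            push_cast; ring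
          have h1 := auxIter φ s.2 (-(((m+1) * p : ℕ) : ℤ)) p
          rw [harith] at h1
          have h2 : φ^[p] (s.1 (-(((m+1) * p : ℕ) : ℤ))) ∈ A' := by
            rw [← h1, ih]; exact hs0.1
          have h3 : s.1 (-(((m+1) * p : ℕ) : ℤ)) ∈ interior (closure (A p)) := hpreV _ h2
          have h4 := hfixV _ h3
          rw [← h4, ← h1, ih]
      intro n
      have h5 : n.natAbs ≤ n.natAbs * p := Nat.le_mul_of_pos_right _ hp0
      have hm : -((n.natAbs * p : ℕ) : ℤ) ≤ n := by
        have h6 : -((n.natAbs * p : ℕ) : ℤ) ≤ -((n.natAbs : ℕ) : ℤ) := by exact_mod_cast neg_le_neg (Int.ofNat_le.mpr h5)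
        have h7 : -((n.natAbs : ℕ) : ℤ) ≤ n := by omega
        linarith
      set c : ℤ := ((n.natAbs * p : ℕ) : ℤ) with hc
      set r : ℕ := (n + c).toNat with hr
      have hrc : (r : ℤ) = n + c := Int.toNat_of_nonneg (by linarith)
      have e1 : s.1 n = φ^[r] (s.1 0) := by
        have h8 := auxIter φ s.2 (-c) r
        rw [show -c + (r:ℤ) = n by rw [hrc]; ring] at h8
        rw [h8, hstep n.natAbs]
      have e2 : s.1 (n + p) = φ^[r + p] (s.1 0) := by
        have h9 := auxIter φ s.2 (-c) (r + p)
        rw [show -c + ((r + p : ℕ):ℤ) = n + p by push_cast; rw [hrc]; push_cast; ring] at h9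
        rw [h9, hstep n.natAbs]
      rw [e1, e2, Function.iterate_add_apply, hs0fix]
    exact open_nonmeagre _ h𝒪open h𝒪ne (hPer.mono h𝒪sub)
end

section
/- Let K be a compact Hausdorff space and φ : K → K a continuous surjection. If the set of all eventually φ-periodic points is of first category in K, then the set of periodic points of the associated shift homeomorphism Φ on the space 𝐊 of φ-strings is of first category in 𝐊. -/
section aux

variable {K : Type*} (φ g : K → K)

/-- A two-sided orbit function: forward by `φ`, backward by a section `g`. -/
noncomputable def strFun (k : K) (n : ℤ) : K :=
  if 0 ≤ n then φ^[n.toNat] k else g^[(-n).toNat] k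

lemma strFun_zero (k : K) : strFun φ g k 0 = k := by simp [strFun]

lemma strFun_rel (hg : ∀ k, φ (g k) = k) (k : K) (n : ℤ) :
    φ (strFun φ g k n) = strFun φ g k (n + 1) := by
  unfold strFun
  rcases le_or_gt 0 n with h | h
  · rw [if_pos h, if_pos (by omega)]
    have : (n + 1).toNat = n.toNat + 1 := by omega
    rw [this, Function.iterate_succ_apply']
  · rw [if_neg (by omega)]
    rcases eq_or_lt_of_le (by omega : n ≤ -1) with h1 | h1
    · subst h1
      norm_num [hg k]
    · rw [if_neg (by omega)]
      have : (-n).toNat = (-(n+1)).toNat + 1 := by omega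
      rw [this, Function.iterate_succ_apply']
      rw [hg]

lemma string_forward {φ : K → K} (t : {k : ℤ → K // ∀ n : ℤ, φ (k n) = k (n + 1)})
    (a : ℤ) (j : ℕ) : t.1 (a + j) = φ^[j] (t.1 a) := by
  induction j with
  | zero => simp
  | succ m ih =>
      have : a + (↑(m + 1) : ℤ) = (a + m) + 1 := by push_cast; ring
      rw [this, ← t.2 (a + m), ih]
      exact (Function.iterate_succ_apply' φ m _).symm

end aux

/-- For a continuous surjection `φ` of a compact Hausdorff space `K`, if
the set of all eventually `φ`-periodic points is meager in `K`, then the set of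
periodic points of the associated shift homeomorphism on the space of `φ`-strings
is meager there. -/
theorem stmt6 {K : Type*} [TopologicalSpace K] [CompactSpace K] [T2Space K]
    (φ : K → K) (hφc : Continuous φ) (hφs : Function.Surjective φ)
    (hmeager : IsMeagre {k : K | ∃ n p : ℕ, 0 < p ∧ φ^[p] (φ^[n] k) = φ^[n] k}) :
    IsMeagre {s : {k : ℤ → K // ∀ n : ℤ, φ (k n) = k (n + 1)} |
      ∃ p : ℕ, 0 < p ∧ ∀ n : ℤ, s.1 (n + p) = s.1 n} := by
  classical
  set 𝕂 := {k : ℤ → K // ∀ n : ℤ, φ (k n) = k (n + 1)} with h𝕂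
  obtain ⟨g, hg⟩ : ∃ g : K → K, ∀ k, φ (g k) = k :=
    ⟨Function.surjInv hφs, fun k => Function.surjInv_eq hφs k⟩
  -- strings through any point at any coordinate
  have hthrough : ∀ (k : K) (M : ℤ), ∃ t : 𝕂, t.1 M = k := by
    intro k M
    refine ⟨⟨fun n => strFun φ g k (n - M), fun n => ?_⟩, by simp [strFun_zero]⟩
    show φ (strFun φ g k (n - M)) = strFun φ g k (n + 1 - M)
    have h2 : n + 1 - M = (n - M) + 1 := by ring
    rw [h2, ← strFun_rel φ g hg k (n - M)]
  -- union decomposition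
  have hset : {s : 𝕂 | ∃ p : ℕ, 0 < p ∧ ∀ n : ℤ, s.1 (n + p) = s.1 n} =
      ⋃ p : ℕ, {s : 𝕂 | 0 < p ∧ ∀ n : ℤ, s.1 (n + p) = s.1 n} := by
    ext s; simp [Set.mem_iUnion]
  rw [hset]
  apply isMeagre_iUnion
  intro p
  rcases Nat.eq_zero_or_pos p with hp | hp
  · simp [hp, IsMeagre.empty]
  -- the set C_p of p-periodic strings
  set C := {s : 𝕂 | ∀ n : ℤ, s.1 (n + p) = s.1 n} with hC
  have hCeq : {s : 𝕂 | 0 < p ∧ ∀ n : ℤ, s.1 (n + p) = s.1 n} = C := by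
    ext s; simp [hC, hp]
  rw [hCeq]
  have hCclosed : IsClosed C := by
    have : C = ⋂ n : ℤ, {s : 𝕂 | s.1 (n + p) = s.1 n} := by
      ext s; simp [hC, Set.mem_iInter]
    rw [this]
    refine isClosed_iInter fun n => isClosed_eq
      (f := fun s : 𝕂 => s.1 (n + p)) (g := fun s : 𝕂 => s.1 n) ?_ ?_
    · exact (continuous_apply ((n : ℤ) + p)).comp continuous_subtype_val
    · exact (continuous_apply n).comp continuous_subtype_val
  -- C has empty interior
  have hCint : interior C = ∅ := by
    by_contra hne
    obtain ⟨s, hs⟩ := Set.nonempty_iff_ne_empty.mpr hne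
    -- get a basic open set around s inside C
    obtain ⟨V, hVopen, hVeq⟩ := (isOpen_induced_iff (f := (Subtype.val : 𝕂 → ℤ → K))).mp isOpen_interior
    have hsV : s.1 ∈ V := by rw [← hVeq] at hs; exact hs
    obtain ⟨I, u, hu, hpi⟩ := isOpen_pi_iff.mp hVopen s.1 hsV
    -- a coordinate below everything in I
    set M : ℤ := -(I.sup fun n => n.natAbs : ℕ) with hM
    have hMle : ∀ n ∈ I, M ≤ n := by
      intro n hn
      have : n.natAbs ≤ I.sup fun n => n.natAbs := Finset.le_sup hn
      omega
    -- the open set W in K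
    set W : Set K := ⋂ n ∈ I, (φ^[(n - M).toNat]) ⁻¹' (u n) with hW
    have hWopen : IsOpen W := by
      apply isOpen_biInter_finset
      intro n hn
      exact ((hu n hn).1).preimage (hφc.iterate _)
    have hcoord : ∀ (t : 𝕂) (n : ℤ), M ≤ n → t.1 n = φ^[(n - M).toNat] (t.1 M) := by
      intro t n hn
      have h2 := string_forward t M (n - M).toNat
      have h3 : M + ((n - M).toNat : ℤ) = n := by omega
      rw [h3] at h2
      exact h2
    have hsW : s.1 M ∈ W := by
      simp only [hW, Set.mem_iInter, Set.mem_preimage]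
      intro n hn
      rw [← hcoord s n (hMle n hn)]
      exact (hu n hn).2
    -- every point of W is φ-periodic with period p
    have hWper : W ⊆ {k : K | ∃ n q : ℕ, 0 < q ∧ φ^[q] (φ^[n] k) = φ^[n] k} := by
      intro w hw
      obtain ⟨t, ht⟩ := hthrough w M
      simp only [hW, Set.mem_iInter, Set.mem_preimage] at hw
      have htV : t.1 ∈ V := by
        apply hpi
        rw [Set.mem_pi]
        intro n hn
        rw [hcoord t n (hMle n hn), ht]
        exact hw n hn
      have htC : t ∈ C := interior_subset (show t ∈ interior C by
        rw [← hVeq]; exact htV)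
      refine ⟨0, p, hp, ?_⟩
      simp only [Function.iterate_zero, id_eq]
      have h4 := htC M
      rw [hcoord t (M + p) (by omega), ht] at h4
      have harg : (M + ↑p - M).toNat = p := by omega
      rw [harg] at h4
      exact h4
    -- contradiction with meagerness via Baire
    have hdense : Dense {k : K | ∃ n q : ℕ, 0 < q ∧ φ^[q] (φ^[n] k) = φ^[n] k}ᶜ :=
      dense_of_mem_residual hmeager
    obtain ⟨x, hxc, hxW⟩ := hdense.exists_mem_open hWopen ⟨s.1 M, hsW⟩
    exact hxc (hWper hxW)
  -- nowhere dense ⇒ meagre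
  have hnwd : IsNowhereDense C := hCclosed.isNowhereDense_iff.mpr hCint
  exact isMeagre_iff_countable_union_isNowhereDense.mpr
    ⟨{C}, by simpa using hnwd, Set.countable_singleton _, by simp⟩
end

section
/- Let K be a compact Hausdorff space, φ : K → K a continuous surjection, w ∈ C(K) with |w| > 0 on K, and T = w·T_φ the weighted composition operator. If λ is in the approximate point spectrum of T then |λ| ≥ ρ_min(T) := min over all φ-invariant regular Borel probability measures μ of exp(∫ log|w| dμ). Consequently, for |λ| < ρ_min(T), the operator λI − T is bounded below (injective with closed range). -/
/-!
If `‖T fₙ - λ fₙ‖ → 0` with `‖fₙ‖ = 1`, then `fₙ` is also an approximate eigenvector of `Tⁿ` for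
`λⁿ`, because `Tⁿ - λⁿ = (∑ Tⁱ λⁿ⁻¹⁻ⁱ)(T - λ)`. Evaluating `(Tⁿ f)(x) = wₙ(x) f(φⁿ x)` at a
`φⁿ`-preimage `x` of a point where `|f|` is maximal gives, for every `ρ > |λ|` and large `n`, an
orbit segment of length `n` along which the Birkhoff average of `log |w|` is at most `log ρ`.
As in the Krylov–Bogolyubov theorem, these Birkhoff averages converge along an ultrafilter to a
positive, normalised, `φ`-invariant functional on `C(K)`; its Riesz measure is a `φ`-invariant
regular probability measure `μ` with `∫ log |w| dμ ≤ log ρ`. The second claim is the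
contrapositive of the first: if `λ - T` is not bounded below, normalising the witnesses yields an
approximate eigenvector.
-/

open MeasureTheory Filter Topology CompactlySupported

section Birkhoff

variable {α : Type*}

theorem birkhoffAverage_comp_self_apply (φ : α → α) (g : α → ℝ) (n : ℕ) (x : α) :
    birkhoffAverage ℝ φ (g ∘ φ) n x = birkhoffAverage ℝ φ g n (φ x) := by
  simp only [birkhoffAverage, birkhoffSum, Function.comp_apply, ← Function.iterate_succ_apply' φ,
    Function.iterate_succ_apply]

theorem birkhoffAverage_mono (φ : α → α) {g g' : α → ℝ} (h : g ≤ g') (n : ℕ) (x : α) :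
    birkhoffAverage ℝ φ g n x ≤ birkhoffAverage ℝ φ g' n x := by
  unfold birkhoffAverage birkhoffSum
  gcongr with k
  exact h _

theorem abs_birkhoffAverage_le (φ : α → α) {g : α → ℝ} {C : ℝ} (hC : 0 ≤ C)
    (hg : ∀ x, |g x| ≤ C) (n : ℕ) (x : α) : |birkhoffAverage ℝ φ g n x| ≤ C := by
  rcases Nat.eq_zero_or_pos n with rfl | hn
  · simpa using hC
  rw [birkhoffAverage, birkhoffSum, smul_eq_mul, abs_mul, abs_inv, Nat.abs_cast,
    inv_mul_le_iff₀ (by positivity)]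
  calc |∑ k ∈ Finset.range n, g (φ^[k] x)| ≤ ∑ k ∈ Finset.range n, C :=
        (Finset.abs_sum_le_sum_abs _ _).trans (Finset.sum_le_sum fun k _ => hg _)
    _ = n * C := by simp

theorem tendsto_birkhoffAverage_comp_self_sub (φ : α → α) {g : α → ℝ} {C : ℝ}
    (hg : ∀ x, |g x| ≤ C) (x : ℕ → α) :
    Tendsto (fun n => birkhoffAverage ℝ φ (g ∘ φ) n (x n) - birkhoffAverage ℝ φ g n (x n))
      atTop (𝓝 0) := by
  have hlim : Tendsto (fun n : ℕ => 2 * C / n) atTop (𝓝 0) :=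
    tendsto_const_nhds.div_atTop tendsto_natCast_atTop_atTop
  refine squeeze_zero_norm (fun n => ?_) hlim
  rw [birkhoffAverage_comp_self_apply, ← dist_eq_norm,
    dist_birkhoffAverage_apply_birkhoffAverage]
  gcongr
  refine (dist_le_norm_add_norm _ _).trans ?_
  rw [Real.norm_eq_abs, Real.norm_eq_abs]
  linarith [hg (φ^[n] (x n)), hg (x n)]

end Birkhoff

theorem MeasureTheory.Measure.map_eq_self_of_integral_comp_eq {X : Type*} [TopologicalSpace X]
    [T2Space X] [LocallyCompactSpace X] [MeasurableSpace X] [BorelSpace X] {μ : Measure X}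
    [IsFiniteMeasure μ] [μ.Regular] {φ : X → X} (hφ : Continuous φ)
    (h : ∀ f : C_c(X, ℝ), ∫ x, f (φ x) ∂μ = ∫ x, f x ∂μ) : μ.map φ = μ := by
  have := InnerRegularCompactLTTop.map_of_continuous (μ := μ) hφ
  refine Measure.ext_of_integral_eq_on_compactlySupported fun f => ?_
  rw [integral_map hφ.aemeasurable (map_continuous f).aestronglyMeasurable, h]

section KrylovBogolyubov

variable {K : Type*} [TopologicalSpace K] [CompactSpace K]

theorem exists_positiveLinearMap_tendsto_birkhoffAverage (φ : K → K) (x : ℕ → K)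
    (U : Ultrafilter ℕ) : ∃ Λ : C_c(K, ℝ) →ₚ[ℝ] ℝ,
      ∀ f : C_c(K, ℝ), Tendsto (fun n => birkhoffAverage ℝ φ f n (x n)) U (𝓝 (Λ f)) := by
  have hlim (f : C_c(K, ℝ)) :
      ∃ l, Tendsto (fun n => birkhoffAverage ℝ φ f n (x n)) U (𝓝 l) := by
    let f' : C(K, ℝ) := f
    have hbdd : ∀ n, birkhoffAverage ℝ φ f n (x n) ∈ Set.Icc (-‖f'‖) ‖f'‖ := fun n =>
      abs_le.1 <| abs_birkhoffAverage_le φ (norm_nonneg f') (fun y => f'.norm_coe_le_norm y) n _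
    obtain ⟨l, -, hl⟩ := isCompact_Icc.ultrafilter_le_nhds (U.map _)
      (le_principal_iff.2 <| Ultrafilter.mem_map.2 <| Filter.univ_mem' hbdd)
    exact ⟨l, hl⟩
  choose L hL using hlim
  refine ⟨{ toFun := L
            map_add' := fun f g => ?_
            map_smul' := fun c f => ?_
            monotone' := fun f g hfg => ?_ }, hL⟩
  · refine tendsto_nhds_unique (hL (f + g)) (((hL f).add (hL g)).congr fun n => ?_)
    simp [birkhoffAverage_add]
  · refine tendsto_nhds_unique (hL (c • f)) (((hL f).const_mul c).congr fun n => ?_)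
    simp [birkhoffAverage, birkhoffSum, Finset.mul_sum, mul_left_comm]
  · exact le_of_tendsto_of_tendsto' (hL f) (hL g) fun n => birkhoffAverage_mono φ hfg n _

variable [T2Space K] [MeasurableSpace K] [BorelSpace K]

theorem exists_invariant_measure_integral_le_of_frequently_birkhoffAverage_le {φ : K → K}
    (hφ : Continuous φ) (g : C(K, ℝ)) {c : ℝ}
    (h : ∃ᶠ n in atTop, ∃ x, birkhoffAverage ℝ φ g n x ≤ c) :
    ∃ μ : Measure K, IsProbabilityMeasure μ ∧ μ.Regular ∧ μ.map φ = μ ∧ ∫ k, g k ∂μ ≤ c := by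
  set l := atTop ⊓ 𝓟 {n | ∃ x, birkhoffAverage ℝ φ g n x ≤ c}
  have : l.NeBot := frequently_iff_neBot.1 h
  obtain ⟨x, hx⟩ := (eventually_inf_principal.2 (.of_forall fun _ hn => hn) :
    ∀ᶠ n in l, ∃ x, birkhoffAverage ℝ φ g n x ≤ c).choice
  set U := Ultrafilter.of l
  have hUl : (U : Filter ℕ) ≤ l := Ultrafilter.of_le l
  have hUtop : (U : Filter ℕ) ≤ atTop := hUl.trans inf_le_left
  obtain ⟨Λ, hΛ⟩ := exists_positiveLinearMap_tendsto_birkhoffAverage φ x U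
  set μ := RealRMK.rieszMeasure Λ
  have hμ (f : C(K, ℝ)) :
      Tendsto (fun n => birkhoffAverage ℝ φ f n (x n)) U (𝓝 (∫ k, f k ∂μ)) := by
    have := hΛ (CompactlySupportedContinuousMap.continuousMapEquiv f)
    rwa [← RealRMK.integral_rieszMeasure] at this
  have hprob : IsProbabilityMeasure μ := by
    have h1 : ∫ k, (1 : C(K, ℝ)) k ∂μ = 1 := by
      refine tendsto_nhds_unique (hμ 1) <| tendsto_const_nhds.congr' <|
        ((eventually_ne_atTop 0).filter_mono hUtop).mono fun n hn => ?_
      simp [birkhoffAverage, birkhoffSum, hn]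
    simpa [isProbabilityMeasure_iff_real] using h1
  have hinv : μ.map φ = μ := by
    refine Measure.map_eq_self_of_integral_comp_eq hφ fun f => ?_
    let f' : C(K, ℝ) := f
    have hshift := tendsto_birkhoffAverage_comp_self_sub φ (fun y => f'.norm_coe_le_norm y) x
    refine tendsto_nhds_unique (hμ (f'.comp ⟨φ, hφ⟩)) ?_
    have := (hμ f').add (hshift.mono_left hUtop)
    simp only [add_sub_cancel, add_zero] at this
    exact this
  exact ⟨μ, hprob, inferInstance, hinv, le_of_tendsto (hμ g) (hx.filter_mono hUl)⟩

end KrylovBogolyubov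

section ApproximateEigenvalue

variable {𝕜 E F : Type*} [NormedAddCommGroup E] [NormedAddCommGroup F]

theorem tendsto_norm_pow_apply_sub_pow_smul [NontriviallyNormedField 𝕜] [NormedSpace 𝕜 E]
    {T : E →L[𝕜] E} {lam : 𝕜} {fs : ℕ → E}
    (h : Tendsto (fun m => ‖T (fs m) - lam • fs m‖) atTop (𝓝 0)) (n : ℕ) :
    Tendsto (fun m => ‖(T ^ n) (fs m) - lam ^ n • fs m‖) atTop (𝓝 0) := by
  set P := ∑ i ∈ Finset.range n, T ^ i * (lam • 1) ^ (n - 1 - i)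
  have hP (f : E) : (T ^ n) f - lam ^ n • f = P (T f - lam • f) := by
    have := ((Commute.one_right T).smul_right lam).geom_sum₂_mul n
    rw [smul_pow, one_pow] at this
    simpa only [mul_apply_eq_comp, sub_apply, smul_apply,
      one_apply_eq_self, map_sub, map_smul] using congr($this f).symm
  refine squeeze_zero (fun _ => norm_nonneg _) (fun m => (hP (fs m)).symm ▸ P.le_opNorm _) ?_
  simpa using h.const_mul ‖P‖

theorem exists_norm_eq_one_tendsto_norm_apply_zero [RCLike 𝕜] [NormedSpace 𝕜 E]
    [NormedSpace 𝕜 F] (S : E →L[𝕜] F)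
    (h : ∀ c > 0, ∃ f, ‖S f‖ < c * ‖f‖) :
    ∃ fs : ℕ → E, (∀ n, ‖fs n‖ = 1) ∧ Tendsto (fun n => ‖S (fs n)‖) atTop (𝓝 0) := by
  choose f hf using fun n : ℕ => h (1 / (n + 1)) Nat.one_div_pos_of_nat
  have hf0 (n : ℕ) : f n ≠ 0 := by
    rintro h0
    simpa [h0] using hf n
  refine ⟨fun n => (‖f n‖⁻¹ : 𝕜) • f n, fun n => norm_smul_inv_norm (hf0 n), ?_⟩
  refine squeeze_zero (fun _ => norm_nonneg _) (fun n => ?_) tendsto_one_div_add_atTop_nhds_zero_nat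
  rw [map_smul, norm_smul, norm_inv, RCLike.norm_ofReal, abs_norm,
    inv_mul_le_iff₀ (norm_pos_iff.2 (hf0 n)), mul_comm]
  exact (hf n).le

end ApproximateEigenvalue

theorem ContinuousMap.exists_norm_apply_eq_norm {K E : Type*} [TopologicalSpace K]
    [CompactSpace K] [Nonempty K] [NormedAddCommGroup E] (f : C(K, E)) : ∃ k, ‖f k‖ = ‖f‖ := by
  obtain ⟨k, -, hk⟩ :=
    isCompact_univ.exists_isMaxOn Set.univ_nonempty f.continuous.norm.continuousOn
  exact ⟨k, le_antisymm (f.norm_coe_le_norm k) ((f.norm_le (norm_nonneg _)).2 fun x => hk trivial)⟩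

section WeightedComposition

variable {K : Type*} {φ : K → K} {w : K → ℂ}

def weightCocycle (φ : K → K) (w : K → ℂ) (n : ℕ) (x : K) : ℂ :=
  ∏ k ∈ Finset.range n, w (φ^[k] x)

theorem log_norm_weightCocycle (hw : ∀ k, w k ≠ 0) (n : ℕ) (x : K) :
    Real.log ‖weightCocycle φ w n x‖ = birkhoffSum φ (fun k => Real.log ‖w k‖) n x := by
  simp [weightCocycle, birkhoffSum, norm_prod, Real.log_prod, hw]

variable [TopologicalSpace K] [CompactSpace K] {T : C(K, ℂ) →L[ℂ] C(K, ℂ)}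

theorem pow_apply_eq_weightCocycle_mul (hT : ∀ (f : C(K, ℂ)) (k : K), T f k = w k * f (φ k))
    (n : ℕ) (f : C(K, ℂ)) (x : K) : (T ^ n) f x = weightCocycle φ w n x * f (φ^[n] x) := by
  induction n generalizing f with
  | zero => simp [weightCocycle]
  | succ n ih =>
    rw [pow_succ, mul_apply_eq_comp, ih, hT, weightCocycle, weightCocycle,
      Finset.prod_range_succ, Function.iterate_succ_apply', mul_assoc]

theorem exists_norm_weightCocycle_le (hT : ∀ (f : C(K, ℂ)) (k : K), T f k = w k * f (φ k))
    (hφ : Function.Surjective φ) {f : C(K, ℂ)} (hf : ‖f‖ = 1) (lam : ℂ) (n : ℕ) :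
    ∃ x, ‖weightCocycle φ w n x‖ ≤ ‖(T ^ n) f - lam ^ n • f‖ + ‖lam‖ ^ n := by
  have : Nonempty K := by
    by_contra! hK
    simp [Subsingleton.elim f 0] at hf
  obtain ⟨k, hk⟩ := f.exists_norm_apply_eq_norm
  obtain ⟨x, rfl⟩ := hφ.iterate n k
  have hfx : ‖f x‖ ≤ 1 := hf ▸ f.norm_coe_le_norm x
  refine ⟨x, ?_⟩
  calc ‖weightCocycle φ w n x‖ = ‖(T ^ n) f x‖ := by
        rw [pow_apply_eq_weightCocycle_mul hT, norm_mul, hk, hf, mul_one]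
    _ ≤ ‖((T ^ n) f - lam ^ n • f) x‖ + ‖lam ^ n * f x‖ := norm_le_norm_sub_add _ _
    _ ≤ ‖(T ^ n) f - lam ^ n • f‖ + ‖lam‖ ^ n := by
        rw [norm_mul, norm_pow]
        gcongr
        · exact ContinuousMap.norm_coe_le_norm _ x
        · exact mul_le_of_le_one_right (by positivity) hfx

theorem eventually_exists_birkhoffAverage_log_norm_le
    (hT : ∀ (f : C(K, ℂ)) (k : K), T f k = w k * f (φ k)) (hφ : Function.Surjective φ)
    (hw : ∀ k, w k ≠ 0) {lam : ℂ} {fs : ℕ → C(K, ℂ)} (hfs : ∀ n, ‖fs n‖ = 1)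
    (hlim : Tendsto (fun n => ‖T (fs n) - lam • fs n‖) atTop (𝓝 0)) {ρ : ℝ} (hρ : ‖lam‖ < ρ) :
    ∀ᶠ n in atTop, ∃ x, birkhoffAverage ℝ φ (fun k => Real.log ‖w k‖) n x ≤ Real.log ρ := by
  filter_upwards [eventually_ne_atTop 0] with n hn
  have hρn : ‖lam‖ ^ n < ρ ^ n := pow_lt_pow_left₀ hρ (norm_nonneg _) hn
  obtain ⟨m, hm⟩ := ((tendsto_norm_pow_apply_sub_pow_smul hlim n).eventually
    (gt_mem_nhds (sub_pos.2 hρn))).exists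
  obtain ⟨x, hx⟩ := exists_norm_weightCocycle_le hT hφ (hfs m) lam n
  have hW : 0 < ‖weightCocycle φ w n x‖ :=
    norm_pos_iff.2 (Finset.prod_ne_zero_iff.2 fun k _ => hw _)
  refine ⟨x, ?_⟩
  rw [birkhoffAverage, smul_eq_mul, ← log_norm_weightCocycle hw,
    inv_mul_le_iff₀ (by positivity), ← Real.log_pow]
  exact Real.log_le_log hW (by linarith)

end WeightedComposition

/-- For a weighted composition operator `T = w·T_φ` on `C(K)` with
nowhere-vanishing weight `w`, every `λ` in the approximate point spectrum of `T`
satisfies `|λ| ≥ ρ_min(T) = inf over φ-invariant regular Borel probability measures μ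
of exp(∫ log|w| dμ)`; consequently for `|λ| < ρ_min(T)` the operator `λI − T`
is bounded below. -/
theorem stmt7 {K : Type*} [TopologicalSpace K] [CompactSpace K] [T2Space K]
    [MeasurableSpace K] [BorelSpace K]
    (φ : K → K) (hφc : Continuous φ) (hφs : Function.Surjective φ)
    (w : C(K, ℂ)) (hw : ∀ k, w k ≠ 0)
    (T : C(K, ℂ) →L[ℂ] C(K, ℂ)) (hT : ∀ (f : C(K, ℂ)) (k : K), T f k = w k * f (φ k)) :
    (∀ lam : ℂ,
      (∃ fs : ℕ → C(K, ℂ), (∀ n, ‖fs n‖ = 1) ∧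
        Tendsto (fun n => ‖T (fs n) - lam • fs n‖) atTop (nhds 0)) →
      sInf {r : ℝ | ∃ μ : Measure K, IsProbabilityMeasure μ ∧ μ.Regular ∧
          Measure.map φ μ = μ ∧
          r = Real.exp (∫ k, Real.log (‖w k‖) ∂μ)} ≤ ‖lam‖) ∧
    (∀ lam : ℂ,
      ‖lam‖ < sInf {r : ℝ | ∃ μ : Measure K, IsProbabilityMeasure μ ∧
          μ.Regular ∧ Measure.map φ μ = μ ∧
          r = Real.exp (∫ k, Real.log (‖w k‖) ∂μ)} →
      ∃ c : ℝ, 0 < c ∧ ∀ f : C(K, ℂ), c * ‖f‖ ≤ ‖T f - lam • f‖) := by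
  set S := {r : ℝ | ∃ μ : Measure K, IsProbabilityMeasure μ ∧ μ.Regular ∧
    Measure.map φ μ = μ ∧ r = Real.exp (∫ k, Real.log (‖w k‖) ∂μ)}
  let g : C(K, ℝ) :=
    ⟨fun k => Real.log ‖w k‖, w.continuous.norm.log fun k => norm_ne_zero_iff.2 (hw k)⟩
  have hbdd : BddBelow S := ⟨0, by rintro r ⟨μ, -, -, -, rfl⟩; positivity⟩
  have happrox (lam : ℂ) (fs : ℕ → C(K, ℂ)) (hfs : ∀ n, ‖fs n‖ = 1)
      (hlim : Tendsto (fun n => ‖T (fs n) - lam • fs n‖) atTop (𝓝 0)) : sInf S ≤ ‖lam‖ := by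
    refine le_of_forall_gt_imp_ge_of_dense fun ρ hρ => ?_
    obtain ⟨μ, hμ, hreg, hinv, hle⟩ :=
      exists_invariant_measure_integral_le_of_frequently_birkhoffAverage_le hφc g
        (eventually_exists_birkhoffAverage_log_norm_le hT hφs hw hfs hlim hρ).frequently
    calc sInf S ≤ Real.exp (∫ k, g k ∂μ) := csInf_le hbdd ⟨μ, hμ, hreg, hinv, rfl⟩
      _ ≤ ρ := by
        rw [← Real.exp_log ((norm_nonneg lam).trans_lt hρ)]
        exact Real.exp_le_exp.2 hle
  refine ⟨fun lam ⟨fs, hfs, hlim⟩ => happrox lam fs hfs hlim, fun lam hlt => ?_⟩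
  by_contra! hnot
  obtain ⟨fs, hfs, hlim⟩ :=
    exists_norm_eq_one_tendsto_norm_apply_zero (T - lam • 1) (by simpa using hnot)
  exact hlt.not_ge (happrox lam fs hfs (by simpa using hlim))
end

section
/- Let K be a compact Hausdorff space, φ : K → K a continuous map, λ ∈ ℂ \ {0}, w ∈ C(K), T = w·T_φ, and k₀ ∈ K a φ-periodic point of period p with w_p(k₀) = λ^p. Then the discrete measure μ = Σ_{i=0}^{p-1} λ^{p-i-1} (T')^i δ_{k₀} is a nonzero element of C(K)' satisfying T'μ = λμ, i.e., λ is an eigenvalue of the adjoint T'. -/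
/-!
Inductively `(T^i f)(k) = w_i(k) f(φ^i k)` with `w_i = ∏_{j<i} w ∘ φ^j`, so periodicity and
`w_p(k₀) = λ^p` give `δ_{k₀} ∘ T^p = λ^p δ_{k₀}`. Writing `a_i = λ^{p-i} δ_{k₀} ∘ T^i`, we have
`μ ∘ T = a_1 + ⋯ + a_p` and `λμ = a_0 + ⋯ + a_{p-1}`, which agree because `a_p = a_0`.
To see `μ ≠ 0`, test it on a Urysohn function equal to `1` at `k₀` and vanishing at the other
points of the orbit (they are distinct from `k₀` by minimality of `p`): only the term `i = 0`
survives, leaving `λ^{p-1} ≠ 0`.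
-/

namespace ContinuousLinearMap

variable {R M N : Type*} [CommSemiring R] [TopologicalSpace M] [AddCommMonoid M] [Module R M]
  [TopologicalSpace N] [AddCommMonoid N] [Module R N] [ContinuousAdd N] [ContinuousConstSMul R N]

theorem sum_smul_comp_pow_comp_eq_smul {δ : M →L[R] N} {T : M →L[R] M} {c : R} {p : ℕ}
    (h : δ.comp (T ^ p) = c ^ p • δ) :
    (∑ i ∈ Finset.range p, c ^ (p - i - 1) • δ.comp (T ^ i)).comp T =
      c • ∑ i ∈ Finset.range p, c ^ (p - i - 1) • δ.comp (T ^ i) := by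
  set a : ℕ → M →L[R] N := fun i ↦ c ^ (p - i) • δ.comp (T ^ i)
  have hshift : (∑ i ∈ Finset.range p, c ^ (p - i - 1) • δ.comp (T ^ i)).comp T =
      ∑ i ∈ Finset.range p, a (i + 1) := by
    rw [finsetSum_comp]
    refine Finset.sum_congr rfl fun i _ ↦ ?_
    rw [smul_comp, comp_assoc, ← mul_def, ← pow_succ, Nat.sub_sub]
  have hscale :
      c • ∑ i ∈ Finset.range p, c ^ (p - i - 1) • δ.comp (T ^ i) = ∑ i ∈ Finset.range p, a i := by
    rw [Finset.smul_sum]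
    refine Finset.sum_congr rfl fun i hi ↦ ?_
    rw [smul_smul, ← pow_succ', Nat.sub_add_cancel (Nat.sub_pos_of_lt (Finset.mem_range.mp hi))]
  have hperiodic : a p = a 0 := by simp [a, h, one_def]
  rw [hshift, hscale]
  cases p with
  | zero => simp
  | succ q => rw [Finset.sum_range_succ, hperiodic, ← Finset.sum_range_succ']

end ContinuousLinearMap

theorem pow_apply_eq_prod_mul_iterate {X R : Type*} [TopologicalSpace X] [CommSemiring R]
    [TopologicalSpace R] [IsTopologicalSemiring R] {φ : X → X} {w : C(X, R)}
    {T : C(X, R) →L[R] C(X, R)} (hT : ∀ f k, T f k = w k * f (φ k)) (i : ℕ) (f : C(X, R))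
    (k : X) : (T ^ i) f k = (∏ j ∈ Finset.range i, w (φ^[j] k)) * f (φ^[i] k) := by
  induction i generalizing f with
  | zero => simp
  | succ n ih =>
    rw [pow_succ, mul_apply_eq_comp, ih, hT, Finset.prod_range_succ,
      Function.iterate_succ_apply', mul_assoc]

theorem exists_continuousMap_eq_one_eqOn_zero {X 𝕜 : Type*} [TopologicalSpace X] [T1Space X]
    [CompletelyRegularSpace X] [RCLike 𝕜] {S : Set X} (hS : S.Finite) {x : X} (hx : x ∉ S) :
    ∃ f : C(X, 𝕜), f x = 1 ∧ Set.EqOn f 0 S := by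
  obtain ⟨g, hg, hgx, hgS⟩ := CompletelyRegularSpace.completely_regular x S hS.isClosed hx
  refine ⟨⟨fun y ↦ 1 - ((g y : ℝ) : 𝕜), by fun_prop⟩, by simp [hgx], fun y hy ↦ ?_⟩
  simp [hgS hy]

theorem sum_smul_evalCLM_comp_pow_apply_of_eqOn_orbit {X R : Type*} [TopologicalSpace X]
    [CommSemiring R] [TopologicalSpace R] [IsTopologicalSemiring R] {φ : X → X} {w : C(X, R)}
    {T : C(X, R) →L[R] C(X, R)} (hT : ∀ f k, T f k = w k * f (φ k)) (c : R) {x : X} {p : ℕ}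
    (hp : 0 < p) {f : C(X, R)} (hf : Set.EqOn f 0 ((fun i ↦ φ^[i] x) '' Set.Ioo 0 p)) :
    (∑ i ∈ Finset.range p, c ^ (p - i - 1) • (ContinuousMap.evalCLM R x).comp (T ^ i)) f =
      c ^ (p - 1) * f x := by
  rw [sum_apply, Finset.sum_eq_single_of_mem 0 (Finset.mem_range.mpr hp)]
  · simp
  · intro i hi hi0
    have hvanish : f (φ^[i] x) = 0 :=
      hf ⟨i, ⟨Nat.pos_of_ne_zero hi0, Finset.mem_range.mp hi⟩, rfl⟩
    rw [smul_apply, ContinuousLinearMap.comp_apply, ContinuousMap.evalCLM_apply,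
      pow_apply_eq_prod_mul_iterate hT, hvanish, mul_zero, smul_zero]

theorem stmt10_general {K : Type*} [TopologicalSpace K] [CompactSpace K] [T2Space K]
    (φ : K → K)
    (w : C(K, ℂ)) (lam : ℂ) (hlam : lam ≠ 0)
    (T : C(K, ℂ) →L[ℂ] C(K, ℂ))
    (hT : ∀ (f : C(K, ℂ)) (k : K), T f k = w k * f (φ k))
    (k₀ : K) (p : ℕ) (hp : 0 < p) (hper : φ^[p] k₀ = k₀)
    (hmin : ∀ m : ℕ, 0 < m → m < p → φ^[m] k₀ ≠ k₀)
    (hwp : ∏ i ∈ Finset.range p, w (φ^[i] k₀) = lam ^ p) :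
    (∑ i ∈ Finset.range p,
        (lam ^ (p - i - 1)) • ((ContinuousMap.evalCLM ℂ k₀).comp (T ^ i))) ≠ 0 ∧
    (∑ i ∈ Finset.range p,
        (lam ^ (p - i - 1)) • ((ContinuousMap.evalCLM ℂ k₀).comp (T ^ i))).comp T =
      lam • ∑ i ∈ Finset.range p,
        (lam ^ (p - i - 1)) • ((ContinuousMap.evalCLM ℂ k₀).comp (T ^ i)) := by
  have hδ : (ContinuousMap.evalCLM ℂ k₀).comp (T ^ p) = lam ^ p • ContinuousMap.evalCLM ℂ k₀ := by
    ext f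
    rw [ContinuousLinearMap.comp_apply, ContinuousMap.evalCLM_apply,
      pow_apply_eq_prod_mul_iterate hT, hper, hwp]
    rfl
  refine ⟨fun hzero ↦ ?_, ContinuousLinearMap.sum_smul_comp_pow_comp_eq_smul hδ⟩
  have hk₀ : k₀ ∉ (fun i ↦ φ^[i] k₀) '' Set.Ioo 0 p := by
    rintro ⟨i, ⟨hi0, hip⟩, hi⟩
    exact hmin i hi0 hip hi
  obtain ⟨f, hf₁, hf₀⟩ :=
    exists_continuousMap_eq_one_eqOn_zero (𝕜 := ℂ) ((Set.finite_Ioo 0 p).image _) hk₀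
  have hμf := sum_smul_evalCLM_comp_pow_apply_of_eqOn_orbit hT lam hp hf₀
  rw [hzero, hf₁, mul_one] at hμf
  exact pow_ne_zero _ hlam hμf.symm

/-- If `k₀` is a `φ`-periodic point of period `p` with `w_p(k₀) = λ^p`
(`λ ≠ 0`), then `μ = Σ_{i=0}^{p-1} λ^{p-i-1} (T')^i δ_{k₀}` is a nonzero continuous
functional on `C(K)` with `T'μ = λμ`, i.e. `λ` is an eigenvalue of the adjoint of
the weighted composition operator `T = w·T_φ`. -/
theorem stmt10 {K : Type*} [TopologicalSpace K] [CompactSpace K] [T2Space K]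
    (φ : K → K) (hφc : Continuous φ)
    (w : C(K, ℂ)) (lam : ℂ) (hlam : lam ≠ 0)
    (T : C(K, ℂ) →L[ℂ] C(K, ℂ))
    (hT : ∀ (f : C(K, ℂ)) (k : K), T f k = w k * f (φ k))
    (k₀ : K) (p : ℕ) (hp : 0 < p) (hper : φ^[p] k₀ = k₀)
    (hmin : ∀ m : ℕ, 0 < m → m < p → φ^[m] k₀ ≠ k₀)
    (hwp : ∏ i ∈ Finset.range p, w (φ^[i] k₀) = lam ^ p) :
    (∑ i ∈ Finset.range p,
        (lam ^ (p - i - 1)) • ((ContinuousMap.evalCLM ℂ k₀).comp (T ^ i))) ≠ 0 ∧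
    (∑ i ∈ Finset.range p,
        (lam ^ (p - i - 1)) • ((ContinuousMap.evalCLM ℂ k₀).comp (T ^ i))).comp T =
      lam • ∑ i ∈ Finset.range p,
        (lam ^ (p - i - 1)) • ((ContinuousMap.evalCLM ℂ k₀).comp (T ^ i)) :=
  stmt10_general φ w lam hlam T hT k₀ p hp hper hmin hwp
end

section
/- Let K be a compact Hausdorff space with no isolated points, φ : K → K a continuous surjection, w ∈ C(K), and T = w·T_φ on C(K). If there exists a point k ∈ Z(w) = {x : w(x) = 0}, i.e., w has a zero, then 0 belongs to the lower semi-Fredholm spectrum of T; concretely, if some zero k of w is not isolated in K, there exist pairwise distinct points k_n with |w(k_n)| ≤ 1/n, and the Dirac measures δ_{k_n} form a singular sequence (no norm-convergent subsequence) in C(K)' with T'δ_{k_n} → 0, so T is not lower semi-Fredholm. -/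
open Filter Topology Set Asymptotics Function

/-!
The range of `T = w · (f ∘ φ)` consists of functions `g` with `g = O(w)`, so it suffices to see
that this condition has infinite codimension in `C(K)` once `w` has a non-isolated zero `k`.
If `w` vanishes on a neighbourhood of `k`, that neighbourhood is infinite and the evaluations at
its points are independent functionals vanishing on the range. Otherwise `k` is a limit of
non-zeros of `w`, and along them the functions `|w|^a`, `0 < a < 1`, are independent modulo
`O(w)`: in a relation, the term with the smallest exponent dominates all the others and `w`.
The singular sequence consists of Dirac functionals at distinct points where `|w|` is small;
distinct Dirac functionals are at distance at least `1`, by Urysohn's lemma.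
-/

theorem exists_injective_forall_mem {α : Type*} {A : ℕ → Set α} (hA : ∀ n, (A n).Infinite) :
    ∃ f : ℕ → α, Injective f ∧ ∀ n, f n ∈ A n := by
  classical
  choose F hFA hFs using fun (s : Finset α) n => (hA n).exists_notMem_finset s
  let G : ℕ → Finset α := fun n => Nat.rec ∅ (fun m s => insert (F s m) s) n
  have hG : Monotone G := monotone_nat_of_le_succ fun n => Finset.subset_insert _ _
  -- the `n`-th point is chosen outside `G n`, which contains all the earlier ones
  have hlt : ∀ m n, m < n → F (G m) m ≠ F (G n) n := fun m n hmn heq =>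
    hFs (G n) n (heq ▸ hG hmn (Finset.mem_insert_self _ _))
  exact ⟨fun n => F (G n) n, fun m n h => by_contra fun hne =>
    (lt_or_gt_of_ne hne).elim (fun hmn => hlt m n hmn h) (fun hnm => hlt n m hnm h.symm),
    fun n => hFA _ _⟩

theorem eq_zero_of_sum_rpow_smul_isBigO {α ι E : Type*} [NormedAddCommGroup E] [NormedSpace ℝ E]
    {l : Filter α} [l.NeBot] {u : α → ℝ} (hu_pos : ∀ᶠ x in l, 0 < u x)
    (hu : Tendsto u l (𝓝 0)) {e : ι → ℝ} (he : Injective e) (he1 : ∀ i, e i < 1)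
    {s : Finset ι} {c : ι → E} (h : (fun x => ∑ i ∈ s, u x ^ e i • c i) =O[l] u) :
    ∀ i ∈ s, c i = 0 := by
  classical
  by_contra! ⟨i, hi, hci⟩
  obtain ⟨j, hj, hmin⟩ := (s.filter (c · ≠ 0)).exists_min_image e ⟨i, by simp [hi, hci]⟩
  rw [Finset.mem_filter] at hj
  -- divide by the dominant power `u ^ e j`: the quotient tends to `c j`, but also to `0`
  set q : α → E := fun x => (u x ^ e j)⁻¹ • ∑ i ∈ s, u x ^ e i • c i
  have hq_eq : ∀ᶠ x in l, ∑ i ∈ s, u x ^ (e i - e j) • c i = q x := by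
    filter_upwards [hu_pos] with x hx
    simp only [q, Finset.smul_sum, smul_smul, Real.rpow_sub hx, div_eq_inv_mul]
  have hterm : ∀ i ∈ s, Tendsto (fun x => u x ^ (e i - e j) • c i) l
      (𝓝 (if i = j then c j else 0)) := by
    intro i hi
    by_cases hij : i = j
    · subst hij
      simp
    by_cases hci : c i = 0
    · simp [hci, hij]
    have hlt : e j < e i := (hmin i (by simp [hi, hci])).lt_of_ne (he.ne (Ne.symm hij))
    simpa [hij] using (hu.rpow_const_nhds_zero (sub_pos.2 hlt)).smul_const (c i)
  have hq_cj : Tendsto q l (𝓝 (c j)) := by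
    have := tendsto_finsetSum s hterm
    rw [Finset.sum_ite_eq' s j, if_pos hj.1] at this
    exact this.congr' hq_eq
  have hq_zero : Tendsto q l (𝓝 0) := by
    refine ((isBigO_refl (fun x => (u x ^ e j)⁻¹) l).smul h).trans_tendsto ?_
    refine (hu.rpow_const_nhds_zero (sub_pos.2 (he1 j))).congr' ?_
    filter_upwards [hu_pos] with x hx
    rw [smul_eq_mul, Real.rpow_sub hx, Real.rpow_one, div_eq_inv_mul]
  exact hj.2 (tendsto_nhds_unique hq_cj hq_zero)

theorem Submodule.not_finiteDimensional_quotient_of_linearIndependent {𝕜 V ι : Type*} [Field 𝕜]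
    [AddCommGroup V] [Module 𝕜 V] [Infinite ι] {p : Submodule 𝕜 V} {f : ι → Module.Dual 𝕜 V}
    (hf : LinearIndependent 𝕜 f) (hp : ∀ i, p ≤ LinearMap.ker (f i)) :
    ¬ FiniteDimensional 𝕜 (V ⧸ p) := fun _ =>
  Module.Finite.not_linearIndependent_of_infinite (fun i => p.liftQ (f i) (hp i))
    (hf.of_comp p.mkQ.dualMap)

namespace ContinuousMap

variable {K : Type*} [TopologicalSpace K] [CompactSpace K]

noncomputable def normRpow (w : C(K, ℂ)) {a : ℝ} (ha : 0 ≤ a) : C(K, ℂ) :=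
  ⟨fun x => ((‖w x‖ ^ a : ℝ) : ℂ), by have := Real.continuous_rpow_const ha; fun_prop⟩

theorem linearIndependent_mkQ_normRpow {w : C(K, ℂ)} {k : K} (hk : w k = 0)
    (hfreq : ∃ᶠ x in 𝓝 k, w x ≠ 0) {p : Submodule ℂ C(K, ℂ)} (hp : ∀ g ∈ p, ⇑g =O[⊤] ⇑w) :
    LinearIndependent ℂ fun a : Ioo (0 : ℝ) 1 => p.mkQ (normRpow w a.2.1.le) := by
  have : (𝓝[{x | w x ≠ 0}] k).NeBot := frequently_iff_neBot.1 hfreq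
  rw [linearIndependent_iff']
  intro s c hsum
  have hmem : ∑ a ∈ s, c a • normRpow w a.2.1.le ∈ p :=
    (Submodule.Quotient.mk_eq_zero p).1 (by simpa [← Submodule.mkQ_apply, map_sum] using hsum)
  refine eq_zero_of_sum_rpow_smul_isBigO (l := 𝓝[{x | w x ≠ 0}] k) (u := fun x => ‖w x‖)
    (eventually_mem_nhdsWithin.mono fun x hx => norm_pos_iff.2 hx) ?_ Subtype.val_injective
    (fun a => a.2.2) ?_
  · simpa [hk] using (w.continuous.norm.tendsto k).mono_left nhdsWithin_le_nhds
  · exact ((hp _ hmem).mono le_top).norm_right.congr_left fun x => by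
      simp [normRpow, Complex.real_smul, mul_comm]

section T2

variable [T2Space K]

theorem exists_apply_eq_one_eqOn_zero {t : Set K} (ht : IsClosed t) {a : K} (ha : a ∉ t) :
    ∃ f : C(K, ℂ), f a = 1 ∧ EqOn f 0 t ∧ ‖f‖ ≤ 1 := by
  obtain ⟨f, hf0, hf1, hf01⟩ := exists_continuous_zero_one_of_isClosed ht isClosed_singleton
    (disjoint_singleton_right.2 ha)
  refine ⟨⟨fun x => (f x : ℂ), by fun_prop⟩, by simp [hf1 rfl], fun x hx => by simp [hf0 hx], ?_⟩
  refine (norm_le _ zero_le_one).2 fun x => ?_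
  simpa [abs_le] using ⟨by linarith [(hf01 x).1], (hf01 x).2⟩

theorem one_le_norm_evalCLM_sub {a b : K} (hab : a ≠ b) :
    1 ≤ ‖(evalCLM ℂ a - evalCLM ℂ b : C(K, ℂ) →L[ℂ] ℂ)‖ := by
  obtain ⟨f, hfa, hfb, hf⟩ := exists_apply_eq_one_eqOn_zero isClosed_singleton hab
  set S : C(K, ℂ) →L[ℂ] ℂ := evalCLM ℂ a - evalCLM ℂ b
  calc (1 : ℝ) = ‖S f‖ := by simp [S, hfa, hfb rfl]
    _ ≤ ‖S‖ * ‖f‖ := S.le_opNorm f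
    _ ≤ ‖S‖ := mul_le_of_le_one_right (norm_nonneg _) hf

theorem not_cauchySeq_evalCLM {ks : ℕ → K} (hks : Injective ks) :
    ¬ CauchySeq fun n => (evalCLM ℂ (ks n) : C(K, ℂ) →L[ℂ] ℂ) := fun h => by
  obtain ⟨N, hN⟩ := Metric.cauchySeq_iff'.1 h 1 one_pos
  have hne : ks (N + 1) ≠ ks N := hks.ne N.succ_ne_self
  have := hN (N + 1) N.le_succ
  rw [dist_eq_norm] at this
  exact this.not_ge (one_le_norm_evalCLM_sub hne)

theorem linearIndependent_evalCLM {ι : Type*} {z : ι → K} (hz : Injective z) :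
    LinearIndependent ℂ fun i => ((evalCLM ℂ (z i) : C(K, ℂ) →L[ℂ] ℂ) : C(K, ℂ) →ₗ[ℂ] ℂ) := by
  classical
  rw [linearIndependent_iff']
  intro s c hsum i hi
  have hzi : z i ∉ z '' ↑(s.erase i) := fun ⟨j, hj, hji⟩ =>
    Finset.ne_of_mem_erase hj (hz hji)
  obtain ⟨f, hfi, hf0, -⟩ :=
    exists_apply_eq_one_eqOn_zero (((s.erase i).finite_toSet.image z).isClosed) hzi
  have := LinearMap.congr_fun hsum f
  simp only [LinearMap.coe_sum, LinearMap.coe_smul, ContinuousLinearMap.coe_coe, Finset.sum_apply,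
    Pi.smul_apply, evalCLM_apply, smul_eq_mul, LinearMap.zero_apply] at this
  rwa [Finset.sum_eq_single i (fun j hj hji => by
      rw [hf0 (mem_image_of_mem z (Finset.mem_erase.2 ⟨hji, hj⟩)), Pi.zero_apply, mul_zero])
    (absurd hi), hfi, mul_one] at this

theorem not_finiteDimensional_quotient_of_isBigO {w : C(K, ℂ)} {k : K} (hk : w k = 0)
    [(𝓝[≠] k).NeBot] {p : Submodule ℂ C(K, ℂ)} (hp : ∀ g ∈ p, ⇑g =O[⊤] ⇑w) :
    ¬ FiniteDimensional ℂ (C(K, ℂ) ⧸ p) := by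
  by_cases hfreq : ∃ᶠ x in 𝓝 k, w x ≠ 0
  · have := Ioo.infinite (zero_lt_one' ℝ)
    exact fun _ => Module.Finite.not_linearIndependent_of_infinite _
      (linearIndependent_mkQ_normRpow hk hfreq hp)
  · have hZ : {x | w x = 0} ∈ 𝓝 k := (not_frequently.1 hfreq).mono fun _ => not_not.1
    have := (infinite_of_mem_nhds k hZ).to_subtype
    refine Submodule.not_finiteDimensional_quotient_of_linearIndependent
      (linearIndependent_evalCLM (z := ((↑) : {x | w x = 0} → K)) Subtype.val_injective)
      fun z g hg => ?_
    exact eventually_top.1 (hp g hg).eq_zero_imp z z.2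

end T2

section WeightedComposition

variable {φ : K → K} {w : C(K, ℂ)} {T : C(K, ℂ) →L[ℂ] C(K, ℂ)}

theorem norm_apply_le_of_eq_mul_comp (hT : ∀ f x, T f x = w x * f (φ x)) (f : C(K, ℂ)) (x : K) :
    ‖T f x‖ ≤ ‖w x‖ * ‖f‖ := by
  rw [hT, norm_mul]
  gcongr
  exact f.norm_coe_le_norm _

theorem isBigO_of_mem_range (hT : ∀ f x, T f x = w x * f (φ x))
    {g : C(K, ℂ)} (hg : g ∈ LinearMap.range (T : C(K, ℂ) →ₗ[ℂ] C(K, ℂ))) : ⇑g =O[⊤] ⇑w := by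
  obtain ⟨f, rfl⟩ := hg
  exact .of_bound ‖f‖ (eventually_top.2 fun x => by
    simpa [mul_comm] using norm_apply_le_of_eq_mul_comp hT f x)

theorem tendsto_evalCLM_comp_of_eq_mul_comp (hT : ∀ f x, T f x = w x * f (φ x))
    {ι : Type*} {l : Filter ι} {ks : ι → K} (hks : Tendsto (fun n => ‖w (ks n)‖) l (𝓝 0)) :
    Tendsto (fun n => (evalCLM ℂ (ks n)).comp T) l (𝓝 0) :=
  squeeze_zero_norm (fun n => ContinuousLinearMap.opNorm_le_bound _ (norm_nonneg _)
    fun f => norm_apply_le_of_eq_mul_comp hT f (ks n)) hks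

end WeightedComposition

end ContinuousMap

/-- A bounded operator is lower semi-Fredholm if its range has finite codimension. -/
def LowerSemiFredholm {X Y : Type*} [NormedAddCommGroup X] [NormedSpace ℂ X]
    [NormedAddCommGroup Y] [NormedSpace ℂ Y] (S : X →L[ℂ] Y) : Prop :=
  FiniteDimensional ℂ (Y ⧸ LinearMap.range (S : X →ₗ[ℂ] Y))

theorem stmt12_general {K : Type*} [TopologicalSpace K] [CompactSpace K] [T2Space K]
    (hK : ∀ x : K, (nhdsWithin x {x}ᶜ).NeBot)
    (φ : K → K)
    (w : C(K, ℂ)) (hzero : ∃ k : K, w k = 0)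
    (T : C(K, ℂ) →L[ℂ] C(K, ℂ))
    (hT : ∀ (f : C(K, ℂ)) (k : K), T f k = w k * f (φ k)) :
    (∃ ks : ℕ → K, Function.Injective ks ∧
      (∀ n : ℕ, ‖w (ks n)‖ ≤ 1 / (n + 1)) ∧
      Tendsto (fun n => (ContinuousMap.evalCLM ℂ (ks n)).comp T) atTop (nhds 0) ∧
      (∀ g : ℕ → ℕ, StrictMono g →
        ¬ ∃ μ : C(K, ℂ) →L[ℂ] ℂ,
          Tendsto (fun n => ContinuousMap.evalCLM ℂ (ks (g n))) atTop (nhds μ))) ∧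
    ¬ LowerSemiFredholm T := by
  obtain ⟨k, hk⟩ := hzero
  have hsmall : ∀ n : ℕ, {x | ‖w x‖ ≤ 1 / (n + 1)}.Infinite := fun n =>
    infinite_of_mem_nhds k <| (w.continuous.norm.tendsto k).eventually_le_const
      (by rw [hk, norm_zero]; positivity)
  obtain ⟨ks, hinj, hks⟩ := exists_injective_forall_mem hsmall
  refine ⟨⟨ks, hinj, hks, ContinuousMap.tendsto_evalCLM_comp_of_eq_mul_comp hT ?_,
    fun g hg ⟨μ, hμ⟩ => ContinuousMap.not_cauchySeq_evalCLM (hinj.comp hg.injective) hμ.cauchySeq⟩,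
    ContinuousMap.not_finiteDimensional_quotient_of_isBigO hk fun _ =>
      ContinuousMap.isBigO_of_mem_range hT⟩
  exact squeeze_zero (fun _ => norm_nonneg _) hks tendsto_one_div_add_atTop_nhds_zero_nat

/-- If `K` has no isolated points and the weight `w` has a zero, then
`0` lies in the lower semi-Fredholm spectrum of `T = w·T_φ`: there are pairwise
distinct points `k_n` with `|w(k_n)| ≤ 1/n`, the Dirac functionals `δ_{k_n}` form a
singular sequence (no norm-convergent subsequence) with `T'δ_{k_n} → 0`, and `T` is
not lower semi-Fredholm. -/
theorem stmt12 {K : Type*} [TopologicalSpace K] [CompactSpace K] [T2Space K]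
    (hK : ∀ x : K, (nhdsWithin x {x}ᶜ).NeBot)
    (φ : K → K) (hφc : Continuous φ) (hφs : Function.Surjective φ)
    (w : C(K, ℂ)) (hzero : ∃ k : K, w k = 0)
    (T : C(K, ℂ) →L[ℂ] C(K, ℂ))
    (hT : ∀ (f : C(K, ℂ)) (k : K), T f k = w k * f (φ k)) :
    (∃ ks : ℕ → K, Function.Injective ks ∧
      (∀ n : ℕ, ‖w (ks n)‖ ≤ 1 / (n + 1)) ∧
      Tendsto (fun n => (ContinuousMap.evalCLM ℂ (ks n)).comp T) atTop (nhds 0) ∧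
      (∀ g : ℕ → ℕ, StrictMono g →
        ¬ ∃ μ : C(K, ℂ) →L[ℂ] ℂ,
          Tendsto (fun n => ContinuousMap.evalCLM ℂ (ks (g n))) atTop (nhds μ))) ∧
    ¬ LowerSemiFredholm T :=
  stmt12_general hK φ w hzero T hT
end

section
/- Let K be a compact Hausdorff space, φ : K → K a continuous surjection, w ∈ C(K), λ ∈ ℂ, and T = w·T_φ. Suppose (k_n)_{n∈ℤ} is a φ-string with all k_n distinct such that Σ_{n=1}^∞ |λ|^n/|w_n(k_{-n})| < ∞ and Σ_{n=0}^∞ |w_n(k_0)|/|λ|^n < ∞ (with w_n(k_{-n}) ≠ 0 for all n, λ ≠ 0). Then the measure μ = Σ_{n=1}^∞ (λ^n / w_n(k_{-n})) δ_{k_{-n}} + Σ_{n=0}^∞ (w_n(k_0)/λ^n) δ_{k_n} is a well-defined element of C(K)' satisfying T'μ = λμ. -/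
/-!
The functional `μ = ∑ₙ cₙ δ_{kₙ}` is an absolutely convergent series in `C(K)'`, since
`‖δₖ‖ ≤ 1` and the two hypotheses say exactly that `∑ₙ |cₙ|` converges over `n ≥ 0` and
`n < 0`. Because `T'δ_{kₙ} = w(kₙ) δ_{kₙ₊₁}`, the eigen-equation `T'μ = λμ` reduces to the
coefficient recursion `cₙ w(kₙ) = λ cₙ₊₁`, after reindexing the series by `n ↦ n + 1`.
-/

/-- `wn φ w n x = w(x)·w(φ(x))⋯w(φ^{n-1}(x))`, with `wn φ w 0 = 1`. -/
noncomputable def wn {K : Type*} [TopologicalSpace K] (φ : K → K) (w : C(K, ℂ)) (n : ℕ) (x : K) : ℂ :=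
  ∏ i ∈ Finset.range n, w (φ^[i] x)

open ContinuousMap

theorem HasSum.comp_eq_smul_of_comp_eq_smul_succ {𝕜 E F : Type*} [NontriviallyNormedField 𝕜]
    [NormedAddCommGroup E] [NormedSpace 𝕜 E] [NormedAddCommGroup F] [NormedSpace 𝕜 F]
    {T : E →L[𝕜] E} {lam : 𝕜} {μ : E →L[𝕜] F} {f : ℤ → E →L[𝕜] F} (hμ : HasSum f μ)
    (hf : ∀ n, (f n).comp T = lam • f (n + 1)) :
    μ.comp T = lam • μ := by
  have hcomp : HasSum (fun n ↦ (f n).comp T) (μ.comp T) :=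
    ((ContinuousLinearMap.compL 𝕜 E E F).flip T).hasSum hμ
  have hshift : HasSum (fun n ↦ f (n + 1)) μ := (Equiv.addRight (1 : ℤ)).hasSum_iff.mpr hμ
  simp only [hf] at hcomp
  exact hcomp.unique (hshift.const_smul lam)

theorem ContinuousMap.norm_evalCLM_le {𝕜 K E : Type*} [NontriviallyNormedField 𝕜] [TopologicalSpace K]
    [CompactSpace K] [NormedAddCommGroup E] [NormedSpace 𝕜 E] (x : K) :
    ‖(evalCLM 𝕜 x : C(K, E) →L[𝕜] E)‖ ≤ 1 :=
  ContinuousLinearMap.opNorm_le_bound _ zero_le_one fun f ↦ by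
    simpa using f.norm_coe_le_norm x

namespace wn

variable {K : Type*} [TopologicalSpace K] (φ : K → K) (w : C(K, ℂ))

theorem zero (x : K) : wn φ w 0 x = 1 := by
  simp [wn]

theorem succ (n : ℕ) (x : K) : wn φ w (n + 1) x = wn φ w n x * w (φ^[n] x) :=
  Finset.prod_range_succ _ n

theorem succ' (n : ℕ) (x : K) : wn φ w (n + 1) x = w x * wn φ w n (φ x) := by
  simp only [wn, Finset.prod_range_succ', Function.iterate_succ_apply, Function.iterate_zero,
    id_eq, mul_comm]

end wn

section String

variable {K : Type*} [TopologicalSpace K] (φ : K → K) (w : C(K, ℂ)) (lam : ℂ) (k : ℤ → K)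

omit [TopologicalSpace K] in
theorem iterate_apply_of_string (hstring : ∀ n, φ (k n) = k (n + 1)) (n : ℤ) (m : ℕ) :
    φ^[m] (k n) = k (n + m) := by
  induction m with
  | zero => simp
  | succ m ih =>
    rw [Function.iterate_succ_apply', ih, hstring]
    push_cast
    ring_nf

noncomputable def stringCoeff (n : ℤ) : ℂ :=
  if 0 ≤ n then wn φ w n.toNat (k 0) / lam ^ n.toNat
  else lam ^ (-n).toNat / wn φ w (-n).toNat (k n)

theorem stringCoeff_natCast (n : ℕ) : stringCoeff φ w lam k n = wn φ w n (k 0) / lam ^ n := by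
  simp [stringCoeff]

theorem stringCoeff_neg_natCast (n : ℕ) :
    stringCoeff φ w lam k (-n) = lam ^ n / wn φ w n (k (-n)) := by
  rcases n.eq_zero_or_pos with rfl | hn
  · simp [stringCoeff, wn.zero]
  · simp [stringCoeff, hn.ne']

theorem summable_norm_stringCoeff
    (hsum1 : Summable fun n : ℕ ↦ ‖lam‖ ^ n / ‖wn φ w n (k (-(n : ℤ)))‖)
    (hsum2 : Summable fun n : ℕ ↦ ‖wn φ w n (k 0)‖ / ‖lam‖ ^ n) :
    Summable fun n ↦ ‖stringCoeff φ w lam k n‖ := by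
  refine Summable.of_nat_of_neg ?_ ?_
  · simpa [stringCoeff_natCast] using hsum2
  · simpa [stringCoeff_neg_natCast] using hsum1

theorem stringCoeff_mul_apply (hlam : lam ≠ 0) (hstring : ∀ n, φ (k n) = k (n + 1))
    (hwnz : ∀ n : ℕ, wn φ w n (k (-(n : ℤ))) ≠ 0) (n : ℤ) :
    stringCoeff φ w lam k n * w (k n) = lam * stringCoeff φ w lam k (n + 1) := by
  rcases n with m | p
  · have hkm : k m = φ^[m] (k 0) := by rw [iterate_apply_of_string φ k hstring]; simp
    simp only [Int.ofNat_eq_natCast, ← Nat.cast_succ, stringCoeff_natCast, wn.succ, hkm, pow_succ]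
    field_simp
  · have hsucc : Int.negSucc p + 1 = -p := by omega
    have hneg : Int.negSucc p = -(p + 1 : ℕ) := by omega
    have hwn : wn φ w (p + 1) (k (Int.negSucc p)) = w (k (Int.negSucc p)) * wn φ w p (k (-p)) := by
      rw [wn.succ', hstring, hsucc]
    have hne : w (k (Int.negSucc p)) * wn φ w p (k (-p)) ≠ 0 := by
      rw [← hwn, hneg]
      exact hwnz (p + 1)
    obtain ⟨hw, hwp⟩ := mul_ne_zero_iff.mp hne
    have hcoeff : stringCoeff φ w lam k (Int.negSucc p) =
        lam ^ (p + 1) / wn φ w (p + 1) (k (Int.negSucc p)) := by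
      rw [hneg, stringCoeff_neg_natCast]
    rw [hcoeff, hsucc, stringCoeff_neg_natCast, hwn, pow_succ]
    field_simp

end String

theorem stmt13_general {K : Type*} [TopologicalSpace K] [CompactSpace K]
    (φ : K → K)
    (w : C(K, ℂ)) (lam : ℂ) (hlam : lam ≠ 0)
    (T : C(K, ℂ) →L[ℂ] C(K, ℂ))
    (hT : ∀ (f : C(K, ℂ)) (x : K), T f x = w x * f (φ x))
    (k : ℤ → K) (hstring : ∀ n : ℤ, φ (k n) = k (n + 1))
    (hwnz : ∀ n : ℕ, wn φ w n (k (-(n : ℤ))) ≠ 0)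
    (hsum1 : Summable (fun n : ℕ =>
      ‖lam‖ ^ n / ‖wn φ w n (k (-(n : ℤ)))‖))
    (hsum2 : Summable (fun n : ℕ =>
      ‖wn φ w n (k 0)‖ / ‖lam‖ ^ n)) :
    ∃ μ : C(K, ℂ) →L[ℂ] ℂ,
      HasSum (fun n : ℤ =>
        (if 0 ≤ n then wn φ w n.toNat (k 0) / lam ^ n.toNat
          else lam ^ (-n).toNat / wn φ w (-n).toNat (k n)) •
          ContinuousMap.evalCLM ℂ (k n)) μ ∧
      μ.comp T = lam • μ := by
  have hsummable :
      Summable fun n ↦ stringCoeff φ w lam k n • (evalCLM ℂ (k n) : C(K, ℂ) →L[ℂ] ℂ) :=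
    .of_norm_bounded (summable_norm_stringCoeff φ w lam k hsum1 hsum2) fun n ↦ by
      rw [norm_smul]
      exact mul_le_of_le_one_right (norm_nonneg _) (norm_evalCLM_le _)
  refine ⟨_, hsummable.hasSum, hsummable.hasSum.comp_eq_smul_of_comp_eq_smul_succ fun n ↦ ?_⟩
  ext f
  simp only [ContinuousLinearMap.comp_apply, _root_.smul_apply, evalCLM_apply,
    smul_eq_mul, hT, hstring]
  rw [← mul_assoc, stringCoeff_mul_apply φ w lam k hlam hstring hwnz, mul_assoc]

/-- Given a `φ`-string `(k_n)_{n∈ℤ}` of distinct points with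
`Σ |λ|^n/|w_n(k_{-n})| < ∞` and `Σ |w_n(k_0)|/|λ|^n < ∞`, the measure
`μ = Σ_{n≥1} (λ^n/w_n(k_{-n})) δ_{k_{-n}} + Σ_{n≥0} (w_n(k_0)/λ^n) δ_{k_n}`
is a well-defined element of `C(K)'` with `T'μ = λμ`. -/
theorem stmt13 {K : Type*} [TopologicalSpace K] [CompactSpace K] [T2Space K]
    (φ : K → K) (hφc : Continuous φ) (hφs : Function.Surjective φ)
    (w : C(K, ℂ)) (lam : ℂ) (hlam : lam ≠ 0)
    (T : C(K, ℂ) →L[ℂ] C(K, ℂ))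
    (hT : ∀ (f : C(K, ℂ)) (x : K), T f x = w x * f (φ x))
    (k : ℤ → K) (hstring : ∀ n : ℤ, φ (k n) = k (n + 1))
    (hinj : Function.Injective k)
    (hwnz : ∀ n : ℕ, wn φ w n (k (-(n : ℤ))) ≠ 0)
    (hsum1 : Summable (fun n : ℕ =>
      ‖lam‖ ^ n / ‖wn φ w n (k (-(n : ℤ)))‖))
    (hsum2 : Summable (fun n : ℕ =>
      ‖wn φ w n (k 0)‖ / ‖lam‖ ^ n)) :
    ∃ μ : C(K, ℂ) →L[ℂ] ℂ,
      HasSum (fun n : ℤ =>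
        (if 0 ≤ n then wn φ w n.toNat (k 0) / lam ^ n.toNat
          else lam ^ (-n).toNat / wn φ w (-n).toNat (k n)) •
          ContinuousMap.evalCLM ℂ (k n)) μ ∧
      μ.comp T = lam • μ :=
  stmt13_general φ w lam hlam T hT k hstring hwnz hsum1 hsum2
end

section
/- Let K be a compact Hausdorff space, φ : K → K an open continuous surjection, and F ⊆ K closed with φ(F) = F and φ^{(-1)}(F) = F. Suppose K \ F = ⋃_{n=0}^∞ φ^{(-n)}(K₂) for some closed set K₂ ⊆ K \ F with φ(K₂) = K₂. Then K₂ has nonempty interior in K. (Proof uses the Baire category theorem on the closed set K \ interior, plus openness of φ.) -/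
/-!
The closed sets `φ^{(-n)}(K₂)` cover the nonempty open set `Fᶜ` of the compact Hausdorff,
hence Baire, space `K`, so one of them contains a nonempty open set `V`. Since `φ` is open,
`φⁿ(V)` is a nonempty open subset of `K₂`.
-/

open Set

theorem IsOpenMap.iterate {X : Type*} [TopologicalSpace X] {f : X → X} (hf : IsOpenMap f)
    (n : ℕ) : IsOpenMap f^[n] := by
  induction n with
  | zero => exact IsOpenMap.id
  | succ n ih => simpa only [Function.iterate_succ] using ih.comp hf

theorem IsOpenMap.interior_nonempty_of_interior_preimage {X Y : Type*} [TopologicalSpace X]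
    [TopologicalSpace Y] {f : X → Y} (hf : IsOpenMap f) {s : Set Y}
    (hs : (interior (f ⁻¹' s)).Nonempty) : (interior s).Nonempty :=
  hs.image f |>.mono <| hf.mapsTo_interior (mapsTo_preimage f s) |>.image_subset

theorem IsOpen.exists_inter_interior_nonempty_of_subset_iUnion_closed {X ι : Type*}
    [TopologicalSpace X] [BaireSpace X] [Countable ι] {U : Set X} (hU : IsOpen U)
    (hne : U.Nonempty) {f : ι → Set X} (hc : ∀ i, IsClosed (f i)) (hUf : U ⊆ ⋃ i, f i) :
    ∃ i, (U ∩ interior (f i)).Nonempty := by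
  have : Nonempty ι := (mem_iUnion.1 (hUf hne.some_mem)).nonempty
  -- Adding `Uᶜ` to every set turns the cover of `U` into a closed cover of the whole space.
  have hcover : ⋃ i, (f i ∪ Uᶜ) = univ := by
    rw [← iUnion_union, ← compl_subset_iff_union]
    exact compl_subset_compl.2 hUf
  obtain ⟨x, hxi, hxU⟩ := (dense_iUnion_interior_of_closed
    (fun i => (hc i).union hU.isClosed_compl) hcover).exists_mem_open hU hne
  obtain ⟨i, hi⟩ := mem_iUnion.1 hxi
  have hsub : interior (f i ∪ Uᶜ) ∩ U ⊆ interior (f i) := by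
    refine interior_maximal ?_ (isOpen_interior.inter hU)
    rintro y ⟨hy, hyU⟩
    exact (interior_subset hy).resolve_right (not_not.2 hyU)
  exact ⟨i, x, hxU, hsub ⟨hi, hxU⟩⟩

theorem stmt17_general {K : Type*} [TopologicalSpace K] [CompactSpace K] [T2Space K]
    (φ : K → K) (hφc : Continuous φ) (hφo : IsOpenMap φ)
    (F : Set K) (hFcl : IsClosed F)
    (K₂ : Set K) (hK₂cl : IsClosed K₂) (hK₂ne : K₂.Nonempty) (hK₂F : K₂ ⊆ Fᶜ)
    (hcover : Fᶜ = ⋃ n : ℕ, (fun k => φ^[n] k) ⁻¹' K₂) :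
    (interior K₂).Nonempty := by
  obtain ⟨n, x, -, hx⟩ := hFcl.isOpen_compl.exists_inter_interior_nonempty_of_subset_iUnion_closed
    (hK₂ne.mono hK₂F) (fun n => hK₂cl.preimage (hφc.iterate n)) hcover.subset
  exact (hφo.iterate n).interior_nonempty_of_interior_preimage ⟨x, hx⟩

/-- Let `φ` be an open continuous surjection of a compact Hausdorff
space `K`, `F` a closed fully invariant set (`φ(F) = F = φ^{(-1)}(F)`), and `K₂` a
nonempty closed set disjoint from `F` with `φ(K₂) = K₂` such that
`K \ F = ⋃_{n≥0} φ^{(-n)}(K₂)`. Then `K₂` has nonempty interior. -/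
theorem stmt17 {K : Type*} [TopologicalSpace K] [CompactSpace K] [T2Space K]
    (φ : K → K) (hφc : Continuous φ) (hφo : IsOpenMap φ) (hφs : Function.Surjective φ)
    (F : Set K) (hFcl : IsClosed F) (hFim : φ '' F = F) (hFpre : φ ⁻¹' F = F)
    (K₂ : Set K) (hK₂cl : IsClosed K₂) (hK₂ne : K₂.Nonempty) (hK₂F : K₂ ⊆ Fᶜ)
    (hK₂im : φ '' K₂ = K₂)
    (hcover : Fᶜ = ⋃ n : ℕ, (fun k => φ^[n] k) ⁻¹' K₂) :
    (interior K₂).Nonempty :=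
  stmt17_general φ hφc hφo F hFcl K₂ hK₂cl hK₂ne hK₂F hcover
end
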